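/- arXiv:2111.07213 — 2 statements merged into one kernel-verified Lean document; each statement's English description precedes it below -/
import Mathlib

section
/- Let V be the free ℝ-module with basis (b_n) indexed by multi-indices n ∈ ℤ^D (i.e., functions Fin D → ℤ). Fix R ∈ ℕ, state-dependent coefficients γ : Fin R → (Fin D → ℤ) → ℝ, and state-change vectors v : Fin R → (Fin D → ℤ). Let L : V → V be the unique linear map with L(b_n) = Σ_{r=1}^{R} γ_r(n) · b_{n + v_r} for every n. Then for every M ∈ ℕ and every initial multi-index n_ini, the M-th power of L satisfies L^M (b_{n_ini}) = Σ_{j : Fin M → Fin R} ( ∏_{m=0}^{M−1} γ_{j(m)}( n_ini + Σ_{m' < m} v_{j(m')} ) ) · b_{ n_ini + Σ_{m=0}^{M−1} v_{j(m)} }, the sum running over all sequences of R event types of length M. -/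
theorem aux_sum {α} [AddCommMonoid α] {M : ℕ} (m : Fin M) (f : Fin (M+1) → α) :
    ∑ m' ∈ Finset.Iio m.succ, f m' = f 0 + ∑ m' ∈ Finset.Iio m, f m'.succ := by
  have h : Finset.Iio m.succ = insert 0 ((Finset.Iio m).map ⟨Fin.succ, Fin.succ_injective _⟩) := by
    ext x
    simp only [Finset.mem_Iio, Finset.mem_insert, Finset.mem_map, Function.Embedding.coeFn_mk,
      Fin.lt_def, Fin.ext_iff, Fin.val_succ, Fin.val_zero]
    constructor
    · intro hx
      rcases Nat.eq_zero_or_pos x.val with h0 | h0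
      · left; exact h0
      · right
        refine ⟨⟨x.val - 1, by omega⟩, ?_, ?_⟩ <;> simp [Fin.lt_def] <;> omega
    · rintro (h0 | ⟨y, hy, hxy⟩)
      · omega
      · omega
  rw [h, Finset.sum_insert (by simp [Fin.ext_iff]), Finset.sum_map]
  rfl

/-- Path-integral-like expansion: if `L` acts on the standard basis of the free
`ℝ`-module over multi-indices `ℤ^D` by `L b_n = Σ_r γ_r(n) b_{n + v_r}`, then
`L^M b_{n_ini}` is the sum over all event sequences `j : Fin M → Fin R` of the
product of the state-dependent rates along the path, times the basis vector at the
final state. -/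
theorem path_integral_like_expansion (D R : ℕ)
    (γ : Fin R → (Fin D → ℤ) → ℝ) (v : Fin R → (Fin D → ℤ))
    (L : Module.End ℝ ((Fin D → ℤ) →₀ ℝ))
    (hL : ∀ n : Fin D → ℤ,
      L (Finsupp.single n 1) = ∑ r : Fin R, γ r n • Finsupp.single (n + v r) (1 : ℝ))
    (M : ℕ) (nini : Fin D → ℤ) :
    (L ^ M) (Finsupp.single nini 1) =
      ∑ j : Fin M → Fin R,
        (∏ m : Fin M, γ (j m) (nini + ∑ m' ∈ Finset.Iio m, v (j m'))) •
          Finsupp.single (nini + ∑ m : Fin M, v (j m)) (1 : ℝ) := by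
  induction M generalizing nini with
  | zero => simp
  | succ M ih =>
    rw [pow_succ, Module.End.mul_apply, hL, map_sum]
    rw [← Equiv.sum_comp (Fin.consEquiv fun _ => Fin R), Fintype.sum_prod_type]
    refine Finset.sum_congr rfl fun r _ => ?_
    rw [map_smul, ih, Finset.smul_sum]
    refine Finset.sum_congr rfl fun jt _ => ?_
    rw [smul_smul]
    have hIio0 : Finset.Iio (0 : Fin (M+1)) = ∅ := by
      ext x; simp [Fin.lt_def]
    congr 1
    · rw [Fin.prod_univ_succ]
      simp only [Fin.consEquiv_apply, Fin.cons_zero, Fin.cons_succ, hIio0,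
        Finset.sum_empty, add_zero]
      congr 1
      refine Finset.prod_congr rfl fun m _ => ?_
      rw [aux_sum m (fun m' => v ((Fin.cons r jt : Fin (M+1) → Fin R) m'))]
      simp [Fin.cons_zero, Fin.cons_succ, add_assoc]
    · congr 1
      rw [Fin.sum_univ_succ]
      simp [Fin.cons_zero, Fin.cons_succ, add_assoc]
end

section
/- Let A be a real n × n matrix and T ∈ ℝ. Then: (i) for all sufficiently large M ∈ ℕ, the matrix I − (T/M)·A is invertible; and (ii) the sequence of matrices ((I − (T/M)·A)⁻¹)^M converges, as M → ∞, to the matrix exponential exp(T·A). -/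
/-!
Near `0`, both `y ↦ (1 - y)⁻¹` and `exp` agree with `1 + y` up to `O(‖y‖²)`. Hence for
`a = (1 - x/M)⁻¹` and `b = exp (x/M)` we have `‖a - b‖ = O(1/M²)` and `‖a‖, ‖b‖ ≤ 1 + C/M`, so
telescoping `a^M - b^M` gives `‖a^M - b^M‖ ≤ M (1 + C/M)^(M-1) ‖a - b‖ = O(1/M)`, while
`b^M = exp x`. Real matrices form such a Banach algebra under the `ℓ∞` operator norm.
-/

open Filter Asymptotics NormedSpace Topology

theorem norm_pow_sub_pow_le {R : Type*} [SeminormedRing R] {a b : R} {K : ℝ}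
    (ha : ‖a‖ ≤ K) (hb : ‖b‖ ≤ K) : ∀ m : ℕ, ‖a ^ m - b ^ m‖ ≤ m * K ^ (m - 1) * ‖a - b‖
  | 0 => by simp
  | 1 => by simp
  | m + 2 => by
    have ih := norm_pow_sub_pow_le ha hb (m + 1)
    have hK : 0 ≤ K := (norm_nonneg a).trans ha
    have hpow : ‖a ^ (m + 1)‖ ≤ K ^ (m + 1) :=
      (norm_pow_le' a m.succ_pos).trans (pow_le_pow_left₀ (norm_nonneg a) ha _)
    have hsplit : a ^ (m + 2) - b ^ (m + 2)
        = a ^ (m + 1) * (a - b) + (a ^ (m + 1) - b ^ (m + 1)) * b := by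
      noncomm_ring
    push_cast at ih ⊢
    calc ‖a ^ (m + 2) - b ^ (m + 2)‖
        ≤ ‖a ^ (m + 1)‖ * ‖a - b‖ + ‖a ^ (m + 1) - b ^ (m + 1)‖ * ‖b‖ := by
          rw [hsplit]
          exact (norm_add_le _ _).trans (add_le_add (norm_mul_le _ _) (norm_mul_le _ _))
      _ ≤ K ^ (m + 1) * ‖a - b‖ + ((m + 1) * K ^ m * ‖a - b‖) * K := by gcongr
      _ = (m + 2) * K ^ (m + 1) * ‖a - b‖ := by ring

theorem tendsto_inv_natCast_smul_nhds_zero {E : Type*} [SeminormedAddCommGroup E] [NormedSpace ℝ E]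
    (x : E) : Tendsto (fun M : ℕ => (M : ℝ)⁻¹ • x) atTop (𝓝 0) := by
  simpa using (tendsto_inv_atTop_zero.comp (tendsto_natCast_atTop_atTop (R := ℝ))).smul_const x

section FirstOrder

variable {R : Type*} [SeminormedRing R] [NormOneClass R]

theorem exists_eventually_norm_le_one_add_mul {F : R → R}
    (hF : (fun y => F y - (1 + y)) =O[𝓝 0] fun y => ‖y‖ ^ 2) :
    ∃ C ≥ 0, ∀ᶠ y in 𝓝 0, ‖F y‖ ≤ 1 + C * ‖y‖ := by
  obtain ⟨c, hc0, hc⟩ := hF.exists_nonneg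
  refine ⟨1 + c, by positivity, ?_⟩
  filter_upwards [hc.bound, Metric.ball_mem_nhds (0 : R) one_pos] with y hy hy1
  rw [mem_ball_zero_iff] at hy1
  rw [norm_pow, norm_norm] at hy
  calc ‖F y‖ ≤ ‖1 + y‖ + ‖F y - (1 + y)‖ := norm_le_insert' _ _
    _ ≤ 1 + ‖y‖ + c * ‖y‖ ^ 2 := by
        gcongr
        exact (norm_add_le _ _).trans_eq (by rw [norm_one])
    _ ≤ 1 + (1 + c) * ‖y‖ := by
        have : ‖y‖ ^ 2 ≤ ‖y‖ := by nlinarith [norm_nonneg y]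
        nlinarith [mul_le_mul_of_nonneg_left this hc0]

theorem tendsto_pow_sub_pow_inv_natCast_smul [NormedSpace ℝ R] {F G : R → R}
    (hF : (fun y => F y - (1 + y)) =O[𝓝 0] fun y => ‖y‖ ^ 2)
    (hG : (fun y => G y - (1 + y)) =O[𝓝 0] fun y => ‖y‖ ^ 2) (x : R) :
    Tendsto (fun M : ℕ => F ((M : ℝ)⁻¹ • x) ^ M - G ((M : ℝ)⁻¹ • x) ^ M) atTop (𝓝 0) := by
  obtain ⟨CF, hCF, hF'⟩ := exists_eventually_norm_le_one_add_mul hF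
  obtain ⟨CG, -, hG'⟩ := exists_eventually_norm_le_one_add_mul hG
  obtain ⟨c, hc⟩ := ((hF.sub hG).congr_left fun y => sub_sub_sub_cancel_right _ _ _).bound
  set C := max CF CG
  have hy := tendsto_inv_natCast_smul_nhds_zero x
  refine squeeze_zero_norm' ?_
    (tendsto_const_div_atTop_nhds_zero_nat (c * ‖x‖ ^ 2 * Real.exp (C * ‖x‖)))
  filter_upwards [hy.eventually hF', hy.eventually hG', hy.eventually hc, eventually_gt_atTop 0]
    with M hFM hGM hcM hM
  have hM' : (0 : ℝ) < M := by exact_mod_cast hM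
  have hnorm : ‖(M : ℝ)⁻¹ • x‖ = ‖x‖ / M := by
    rw [norm_smul, norm_inv, Real.norm_natCast, inv_mul_eq_div]
  rw [hnorm] at hFM hGM hcM
  set K := 1 + C * (‖x‖ / M)
  have hK : K ^ (M - 1) ≤ Real.exp (C * ‖x‖) := by
    have hC : 0 ≤ C * (‖x‖ / M) := mul_nonneg (hCF.trans (le_max_left _ _)) (by positivity)
    calc K ^ (M - 1) ≤ K ^ M := pow_le_pow_right₀ (le_add_of_nonneg_right hC) (Nat.sub_le _ _)
      _ ≤ Real.exp (C * (‖x‖ / M)) ^ M := by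
        gcongr
        linarith [Real.add_one_le_exp (C * (‖x‖ / M))]
      _ = Real.exp (C * ‖x‖) := by
        rw [← Real.exp_nat_mul]
        field_simp
  calc _ ≤ M * K ^ (M - 1) * ‖F ((M : ℝ)⁻¹ • x) - G ((M : ℝ)⁻¹ • x)‖ :=
        norm_pow_sub_pow_le (hFM.trans (by dsimp only [K]; gcongr; exact le_max_left _ _))
          (hGM.trans (by dsimp only [K]; gcongr; exact le_max_right _ _)) M
    _ ≤ M * Real.exp (C * ‖x‖) * (c * (‖x‖ / M) ^ 2) := by
        gcongr
        simpa using hcM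
    _ = c * ‖x‖ ^ 2 * Real.exp (C * ‖x‖) / M := by field_simp

end FirstOrder

theorem isBigO_exp_sub_one_add {𝔸 : Type*} [NormedRing 𝔸] [NormedAlgebra ℝ 𝔸] [CompleteSpace 𝔸] :
    (fun y : 𝔸 => exp y - (1 + y)) =O[𝓝 0] fun y => ‖y‖ ^ 2 := by
  simpa [FormalMultilinearSeries.partialSum, Finset.sum_range_succ, expSeries_apply_eq] using
    (exp_hasFPowerSeriesAt_zero (𝕂 := ℝ) (𝔸 := 𝔸)).isBigO_sub_partialSum_pow 2

theorem isBigO_inverse_one_sub_sub_one_add {R : Type*} [NormedRing R] [HasSummableGeomSeries R] :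
    (fun y : R => Ring.inverse (1 - y) - (1 + y)) =O[𝓝 0] fun y => ‖y‖ ^ 2 := by
  have hsq : (fun y : R => y ^ 2) =O[𝓝 0] fun y => ‖y‖ ^ 2 :=
    isBigO_of_le _ fun y => by simpa using norm_pow_le' y two_pos
  have hrem := hsq.mul NormedRing.inverse_one_sub_norm
  simp only [mul_one] at hrem
  refine EventuallyEq.trans_isBigO ?_ hrem
  filter_upwards [NormedRing.inverse_one_sub_nth_order 2] with y hy
  nth_rw 1 [hy]
  simp only [Finset.sum_range_succ, Finset.sum_range_zero, pow_zero, pow_one, zero_add]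
  abel

theorem tendsto_pow_inv_natCast_smul_of_isBigO {𝔸 : Type*} [NormedRing 𝔸] [NormOneClass 𝔸]
    [NormedAlgebra ℝ 𝔸] [CompleteSpace 𝔸] {F : 𝔸 → 𝔸}
    (hF : (fun y => F y - (1 + y)) =O[𝓝 0] fun y => ‖y‖ ^ 2) (x : 𝔸) :
    Tendsto (fun M : ℕ => F ((M : ℝ)⁻¹ • x) ^ M) atTop (𝓝 (exp x)) := by
  let : NormedAlgebra ℚ 𝔸 := NormedAlgebra.restrictScalars ℚ ℝ 𝔸
  have hexp : ∀ᶠ M : ℕ in atTop, exp ((M : ℝ)⁻¹ • x) ^ M = exp x := by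
    filter_upwards [eventually_ne_atTop 0] with M hM
    rw [← exp_nsmul, ← Nat.cast_smul_eq_nsmul ℝ, smul_smul,
      mul_inv_cancel₀ (Nat.cast_ne_zero.2 hM), one_smul]
  have hdiff := (tendsto_pow_sub_pow_inv_natCast_smul hF isBigO_exp_sub_one_add x).add
    (tendsto_const_nhds (x := exp x))
  rw [zero_add] at hdiff
  exact hdiff.congr' (hexp.mono fun M hM => by rw [← hM, sub_add_cancel])

theorem tendsto_inverse_one_sub_inv_natCast_smul_pow {𝔸 : Type*} [NormedRing 𝔸] [NormOneClass 𝔸]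
    [NormedAlgebra ℝ 𝔸] [CompleteSpace 𝔸] (x : 𝔸) :
    Tendsto (fun M : ℕ => Ring.inverse (1 - (M : ℝ)⁻¹ • x) ^ M) atTop (𝓝 (exp x)) :=
  tendsto_pow_inv_natCast_smul_of_isBigO isBigO_inverse_one_sub_sub_one_add x

/-- Resolvent representation of the matrix exponential: for a real `n × n` matrix `A`
and `T ∈ ℝ`, the matrix `I − (T/M)·A` is invertible for all sufficiently large `M`, and
`((I − (T/M)·A)⁻¹)^M → exp(T·A)` as `M → ∞`. -/
theorem resolvent_exp_limit {n : ℕ} (A : Matrix (Fin n) (Fin n) ℝ) (T : ℝ) :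
    (∃ M₀ : ℕ, ∀ M : ℕ, M₀ ≤ M → IsUnit (1 - (T / M) • A)) ∧
    Filter.Tendsto (fun M : ℕ => ((1 - (T / M) • A)⁻¹) ^ M) Filter.atTop
      (nhds (NormedSpace.exp (T • A))) := by
  -- the `ℓ∞` operator norm has `‖1‖ = 1` only for a nonempty index type
  rcases isEmpty_or_nonempty (Fin n) with _ | _
  · exact ⟨⟨0, fun _ _ => isUnit_of_subsingleton _⟩,
      tendsto_const_nhds.congr fun _ => Subsingleton.elim _ _⟩
  let := Matrix.linftyOpNormedRing (n := Fin n) (α := ℝ)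
  let := Matrix.linftyOpNormedAlgebra (n := Fin n) (R := ℝ) (α := ℝ)
  have hsmul (M : ℕ) : (T / M) • A = (M : ℝ)⁻¹ • (T • A) := by rw [smul_smul, div_eq_inv_mul]
  simp only [hsmul, Matrix.nonsing_inv_eq_ringInverse]
  have hunit : ∀ᶠ y in 𝓝 (0 : Matrix (Fin n) (Fin n) ℝ), IsUnit (1 - y) :=
    Metric.eventually_nhds_iff.2 ⟨1, one_pos, fun y hy =>
      isUnit_one_sub_of_norm_lt_one (by rwa [dist_zero_right] at hy)⟩
  exact ⟨eventually_atTop.1 ((tendsto_inv_natCast_smul_nhds_zero (T • A)).eventually hunit),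
    tendsto_inverse_one_sub_inv_natCast_smul_pow (T • A)⟩
end
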